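/- Let σ: 𝒜 → ℬ⁺ be a non-erasing morphism between finite alphabets, let x ∈ 𝒜^ℤ, and let X be the closure of the shift orbit of x in 𝒜^ℤ. Suppose (X,T) is minimal, σ is injective on letters (σ(a) = σ(b) implies a = b), and σ is recognizable in the sense of Mossé for x. Then σ is recognizable in X: each y ∈ ℬ^ℤ has at most one centered σ-representation (k,x') with x' ∈ X. -/

import Mathlib

open scoped BigOperators

namespace Recog

variable {A B C : Type*}

/-- A morphism assigning a word to each letter is non-erasing if every image is nonempty. -/
def NonErasing (σ : A → List B) : Prop := ∀ a, σ a ≠ []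

/-- Apply a morphism letterwise to a finite word, concatenating the images. -/
def wordApply (σ : A → List B) : List A → List B
  | [] => []
  | a :: w => σ a ++ wordApply σ w

/-- Composition of morphisms `τ ∘ σ`. -/
def comp (τ : B → List C) (σ : A → List B) : A → List C := fun a => wordApply τ (σ a)

/-- The `ℓ`-th cutting point of the representation `(0, x)`:
`|σ(x_[0,ℓ))|` for `ℓ ≥ 0` and `-|σ(x_[ℓ,0))|` for `ℓ < 0`. -/
def cut (σ : A → List B) (x : ℤ → A) (ℓ : ℤ) : ℤ :=
  if 0 ≤ ℓ then ∑ i ∈ Finset.range ℓ.toNat, ((σ (x i)).length : ℤ)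
  else -∑ i ∈ Finset.range (-ℓ).toNat, ((σ (x (-(i : ℤ) - 1))).length : ℤ)

/-- `y` is the bi-infinite image `σ(x)`, where `σ(x₀)` starts at position `0`. -/
def IsSubstPt (σ : A → List B) (x : ℤ → A) (y : ℤ → B) : Prop :=
  ∀ (ℓ : ℤ) (j : ℕ) (hj : j < (σ (x ℓ)).length),
    y (cut σ x ℓ + j) = (σ (x ℓ)).get ⟨j, hj⟩

/-- `(k, x)` is a `σ`-representation of `y`, i.e. `y = T^k σ(x)`. -/
def IsRep (σ : A → List B) (y : ℤ → B) (k : ℤ) (x : ℤ → A) : Prop :=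
  IsSubstPt σ x fun n => y (n - k)

/-- `(k, x)` is a centered `σ`-representation of `y`: `y = T^k σ(x)` with `0 ≤ k < |σ(x₀)|`. -/
def IsCenteredRep (σ : A → List B) (y : ℤ → B) (k : ℤ) (x : ℤ → A) : Prop :=
  IsRep σ y k x ∧ 0 ≤ k ∧ k < ((σ (x 0)).length : ℤ)

/-- `y` is aperiodic: `T^p y ≠ y` for all `p ≥ 1`. -/
def Aperiodic (y : ℤ → B) : Prop := ∀ p : ℕ, 1 ≤ p → (fun n => y (n + p)) ≠ y

/-- `y` is periodic: `T^p y = y` for some `p ≥ 1`. -/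
def Periodic (y : ℤ → B) : Prop := ∃ p : ℕ, 1 ≤ p ∧ (fun n => y (n + p)) = y

/-- The set of `σ`-cutting points of the representation `(k, x)`. -/
def cutSet (σ : A → List B) (x : ℤ → A) (k : ℤ) : Set ℤ :=
  {m : ℤ | ∃ ℓ : ℤ, m = cut σ x ℓ - k}

/-- `σ` is recognizable in `X`: every `y` has at most one centered `σ`-representation in `X`. -/
def RecIn (σ : A → List B) (X : Set (ℤ → A)) : Prop :=
  ∀ (y : ℤ → B) (k k' : ℤ) (x x' : ℤ → A), x ∈ X → x' ∈ X →
    IsCenteredRep σ y k x → IsCenteredRep σ y k' x' → k = k' ∧ x = x'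

/-- `σ` is recognizable in `X` for aperiodic points. -/
def RecInAp (σ : A → List B) (X : Set (ℤ → A)) : Prop :=
  ∀ y : ℤ → B, Aperiodic y → ∀ (k k' : ℤ) (x x' : ℤ → A), x ∈ X → x' ∈ X →
    IsCenteredRep σ y k x → IsCenteredRep σ y k' x' → k = k' ∧ x = x'

/-- `σ` is left permutative: the first letters of `σ a` and `σ b` differ for distinct `a, b`. -/
def LeftPermutative (σ : A → List B) : Prop :=
  ∀ a b : A, a ≠ b → (σ a).head? ≠ (σ b).head?

/-- `σ` is right permutative: the last letters of `σ a` and `σ b` differ for distinct `a, b`. -/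
def RightPermutative (σ : A → List B) : Prop :=
  ∀ a b : A, a ≠ b → (σ a).getLast? ≠ (σ b).getLast?

/-- `σ` and `σ'` are rotationally conjugate. -/
def RotConj (σ σ' : A → List B) : Prop :=
  ∃ w : List B, (∀ a, σ a ++ w = w ++ σ' a) ∨ (∀ a, w ++ σ a = σ' a ++ w)

/-- The incidence matrix of `σ`, over `ℚ`: entry `(b, a)` counts occurrences of `b` in `σ a`. -/
noncomputable def incidence (σ : A → List B) [DecidableEq B] : Matrix B A ℚ :=
  Matrix.of fun b a => ((σ a).count b : ℚ)

/-- The finite subword `x_[i, i+m)` of a bi-infinite sequence. -/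
def factor (x : ℤ → A) (i : ℤ) (m : ℕ) : List A := (List.range m).map fun j => x (i + j)

/-- The language of a bi-infinite sequence: the set of its finite subwords. -/
def lang (x : ℤ → A) : Set (List A) := {w | ∃ (i : ℤ) (m : ℕ), w = factor x i m}

/-- `σ` is injective on bi-infinite sequences. -/
def InjZ (σ : A → List B) : Prop :=
  ∀ (x x' : ℤ → A) (y : ℤ → B), IsSubstPt σ x y → IsSubstPt σ x' y → x = x'

/-- Cutting points for one-sided sequences. -/
def cutN (σ : A → List B) (x : ℕ → A) (ℓ : ℕ) : ℕ :=
  ∑ i ∈ Finset.range ℓ, (σ (x i)).length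

/-- `y` is the one-sided image `σ(x)` for `x : ℕ → A`. -/
def IsSubstPtN (σ : A → List B) (x : ℕ → A) (y : ℕ → B) : Prop :=
  ∀ (ℓ j : ℕ) (hj : j < (σ (x ℓ)).length),
    y (cutN σ x ℓ + j) = (σ (x ℓ)).get ⟨j, hj⟩

/-- `σ` is injective on one-sided (right-infinite) sequences. -/
def InjN (σ : A → List B) : Prop :=
  ∀ (x x' : ℕ → A) (y : ℕ → B), IsSubstPtN σ x y → IsSubstPtN σ x' y → x = x'

/-- The total length `⦀σ⦀ = Σ_a |σ a|`. -/
def totalLen (σ : A → List B) [Fintype A] : ℕ := ∑ a, (σ a).length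

/-- `X` is invariant under the two-sided shift. -/
def ShiftInvariant (X : Set (ℤ → A)) : Prop :=
  ∀ x ∈ X, (fun n => x (n + 1)) ∈ X ∧ (fun n => x (n - 1)) ∈ X

/-- The iterate `σ^n` of a substitution, applied to a letter. -/
def iter (σ : A → List A) : ℕ → A → List A
  | 0, a => [a]
  | n + 1, a => wordApply (iter σ n) (σ a)

/-- The language `ℒ_σ` of a substitution: subwords of the `σ^n(a)`. -/
def subLang (σ : A → List A) : Set (List A) := {w | ∃ (n : ℕ) (a : A), w <:+: iter σ n a}

/-- The substitutive shift `X_σ`. -/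
def subX (σ : A → List A) : Set (ℤ → A) := {x | ∀ w ∈ lang x, w ∈ subLang σ}

/-- `σ` is recognizable in the sense of Mossé for `x`. -/
def MosseRec (σ : A → List B) (x : ℤ → A) : Prop :=
  ∃ ℓ : ℕ, ∀ y : ℤ → B, IsSubstPt σ x y →
    ∀ m ∈ cutSet σ x 0, ∀ m' : ℤ,
      factor y (m - ℓ) (2 * ℓ) = factor y (m' - ℓ) (2 * ℓ) → m' ∈ cutSet σ x 0

section Sadic

variable {𝒜 : ℕ → Type*}

/-- `block σ N = σ_[0,N)`, mapping a letter of `𝒜 N` to a word over `𝒜 0`. -/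
def block (σ : ∀ n, 𝒜 (n + 1) → List (𝒜 n)) : ∀ N, 𝒜 N → List (𝒜 0)
  | 0, a => [a]
  | N + 1, a => wordApply (block σ N) (σ N a)

/-- `blockFrom σ n k = σ_[n,n+k)`, mapping a letter of `𝒜 (n+k)` to a word over `𝒜 n`. -/
def blockFrom (σ : ∀ n, 𝒜 (n + 1) → List (𝒜 n)) (n k : ℕ) : 𝒜 (n + k) → List (𝒜 n) :=
  block (𝒜 := fun m => 𝒜 (n + m)) (fun m => σ (n + m)) k

/-- The language `ℒ^(n)_σ` of a directive sequence. -/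
def sadicLang (σ : ∀ n, 𝒜 (n + 1) → List (𝒜 n)) (n : ℕ) : Set (List (𝒜 n)) :=
  {w | ∃ (k : ℕ) (a : 𝒜 (n + k)), 1 ≤ k ∧ w <:+: blockFrom σ n k a}

/-- The shift `X^(n)_σ` of a directive sequence. -/
def sadicX (σ : ∀ n, 𝒜 (n + 1) → List (𝒜 n)) (n : ℕ) : Set (ℤ → 𝒜 n) :=
  {x | ∀ w ∈ lang x, w ∈ sadicLang σ n}

/-- A directive sequence is everywhere growing if `min_a |σ_[0,n)(a)| → ∞`. -/
def EverywhereGrowing (σ : ∀ n, 𝒜 (n + 1) → List (𝒜 n)) : Prop :=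
  ∀ m : ℕ, ∃ N : ℕ, ∀ n ≥ N, ∀ a : 𝒜 n, m ≤ (block σ n a).length

end Sadic

end Recog

/-!
Mossé recognizability says that the cutting points of `σ(x)` are recognized by their windows of
radius `ℓ`. Every finite block of a point `z` of the orbit closure of `x` occurs in `x`, so `σ(z)`
looks locally like `σ(x)`, cutting points included, and the same windows recognize the cutting
points of `σ(z)`. Hence two centered representations `(k₁, z₁)`, `(k₂, z₂)` of `y` by points of the
orbit closure have the same cutting points. Centering then forces `k₁ = k₂`, so the cut functions of
`z₁` and `z₂` coincide, `σ(z₁ ℓ) = σ(z₂ ℓ)` for every `ℓ`, and injectivity on letters gives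
`z₁ = z₂`.
-/

theorem eq_of_strictMono_of_range_eq {β : Type*} [LinearOrder β] {f g : ℤ → β}
    (hf : StrictMono f) (hg : StrictMono g) (hfg : Set.range f = Set.range g) (h0 : f 0 = g 0) :
    f = g := by
  have step : ∀ {f g : ℤ → β}, StrictMono f → StrictMono g → Set.range f ⊆ Set.range g →
      ∀ ℓ, f ℓ = g ℓ → g (ℓ + 1) ≤ f (ℓ + 1) ∧ f (ℓ - 1) ≤ g (ℓ - 1) := by
    intro f g hf hg hfg ℓ hℓ
    obtain ⟨s, hs⟩ := hfg ⟨ℓ + 1, rfl⟩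
    obtain ⟨s', hs'⟩ := hfg ⟨ℓ - 1, rfl⟩
    have hlt : ℓ < s := hg.lt_iff_lt.mp (by rw [hs, ← hℓ]; exact hf (lt_add_one ℓ))
    have hgt : s' < ℓ := hg.lt_iff_lt.mp (by rw [hs', ← hℓ]; exact hf (sub_one_lt ℓ))
    exact ⟨hs ▸ hg.monotone (Int.add_one_le_iff.mpr hlt),
      hs' ▸ hg.monotone (Int.le_sub_one_iff.mpr hgt)⟩
  funext ℓ
  induction ℓ using Int.induction_on with
  | zero => exact h0
  | succ i ih =>
    exact le_antisymm (step hg hf hfg.ge i ih.symm).1 (step hf hg hfg.le i ih).1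
  | pred i ih =>
    exact le_antisymm (step hf hg hfg.le _ ih).2 (step hg hf hfg.ge _ ih.symm).2

namespace Recog

variable {A B : Type*}

theorem factor_congr {y y' : ℤ → B} {i i' : ℤ} {n : ℕ}
    (h : ∀ j : ℕ, j < n → y (i + j) = y' (i' + j)) : factor y i n = factor y' i' n := by
  refine List.map_congr_left fun j hj => ?_
  obtain ⟨a, ha, rfl⟩ : ∃ a < n, j = a := by simpa using hj
  exact h a ha

section Cut

variable (σ : A → List B) (z : ℤ → A)

theorem cut_natCast (n : ℕ) : cut σ z n = ∑ i ∈ Finset.range n, ((σ (z i)).length : ℤ) := by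
  simp [cut]

theorem cut_neg_natCast (n : ℕ) :
    cut σ z (-n) = -∑ i ∈ Finset.range n, ((σ (z (-(i : ℤ) - 1))).length : ℤ) := by
  rcases n.eq_zero_or_pos with rfl | hn
  · simp [cut]
  · simp [cut, hn.ne']

theorem cut_zero : cut σ z 0 = 0 := by simp [cut]

theorem cut_succ (ℓ : ℤ) : cut σ z (ℓ + 1) = cut σ z ℓ + (σ (z ℓ)).length := by
  obtain ⟨n, rfl | rfl⟩ := ℓ.eq_nat_or_neg
  · rw [← Nat.cast_succ, cut_natCast, cut_natCast, Finset.sum_range_succ]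
  · rcases n with _ | n
    · simp [cut]
    · rw [show -((n + 1 : ℕ) : ℤ) + 1 = -n by push_cast; ring, cut_neg_natCast,
        cut_neg_natCast, Finset.sum_range_succ]
      push_cast
      ring_nf

theorem cut_eq_of_zero_of_succ {c : ℤ → ℤ} (h0 : c 0 = 0)
    (hsucc : ∀ ℓ, c (ℓ + 1) = c ℓ + (σ (z ℓ)).length) : c = cut σ z := by
  funext ℓ
  induction ℓ using Int.induction_on with
  | zero => rw [h0, cut_zero]
  | succ i ih => rw [hsucc, cut_succ, ih]
  | pred i ih =>
    have h := hsucc (-i - 1)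
    have h' := cut_succ σ z (-i - 1)
    rw [sub_add_cancel] at h h'
    linarith

theorem cut_monotone : Monotone (cut σ z) :=
  monotone_int_of_le_succ fun ℓ => by rw [cut_succ]; omega

theorem sub_le_cut_sub_cut (hσ : NonErasing σ) {ℓ ℓ' : ℤ} (h : ℓ ≤ ℓ') :
    ℓ' - ℓ ≤ cut σ z ℓ' - cut σ z ℓ := by
  induction ℓ', h using Int.leInduction with
  | base => simp
  | succ n _ ih =>
    have := List.length_pos_iff.mpr (hσ (z n))
    rw [cut_succ]
    omega

theorem cut_strictMono (hσ : NonErasing σ) : StrictMono (cut σ z) :=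
  strictMono_int_of_lt_succ fun ℓ => by
    have := sub_le_cut_sub_cut σ z hσ (Int.le_add_one (le_refl ℓ))
    omega

theorem exists_cut_le (hσ : NonErasing σ) (p : ℤ) : ∃ a, cut σ z a ≤ p := by
  refine ⟨min p 0, ?_⟩
  have := sub_le_cut_sub_cut σ z hσ (min_le_right p 0)
  rw [cut_zero] at this
  omega

theorem exists_lt_cut (hσ : NonErasing σ) (p : ℤ) : ∃ b, p < cut σ z b := by
  refine ⟨max p 0 + 1, ?_⟩
  have := sub_le_cut_sub_cut σ z hσ (show 0 ≤ max p 0 + 1 by omega)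
  rw [cut_zero] at this
  omega

theorem exists_cut_le_lt (hσ : NonErasing σ) (p : ℤ) :
    ∃ ℓ, cut σ z ℓ ≤ p ∧ p < cut σ z (ℓ + 1) := by
  obtain ⟨a, ha⟩ := exists_cut_le σ z hσ p
  obtain ⟨b, hb⟩ := exists_lt_cut σ z hσ p
  have hbdd : ∀ ℓ, cut σ z ℓ ≤ p → ℓ ≤ b := fun ℓ h =>
    ((cut_strictMono σ z hσ).lt_iff_lt.mp (h.trans_lt hb)).le
  obtain ⟨ℓ, hℓ, hmax⟩ := Int.exists_greatest_of_bdd ⟨b, hbdd⟩ ⟨a, ha⟩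
  exact ⟨ℓ, hℓ, not_le.mp fun h => by linarith [hmax _ h]⟩

theorem cut_comp_add (s : ℤ) :
    cut σ (fun t => z (t + s)) = fun ℓ => cut σ z (ℓ + s) - cut σ z s :=
  (cut_eq_of_zero_of_succ σ _ (by simp) fun ℓ => by
    simp only [add_right_comm ℓ 1 s, cut_succ]; ring).symm

theorem mem_range_cut_comp_add {s p : ℤ} :
    p ∈ Set.range (cut σ fun t => z (t + s)) ↔ p + cut σ z s ∈ Set.range (cut σ z) := by
  rw [cut_comp_add]
  constructor
  · rintro ⟨ℓ, rfl⟩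
    exact ⟨ℓ + s, by ring⟩
  · rintro ⟨ℓ, hℓ⟩
    exact ⟨ℓ - s, by simp [hℓ]⟩

theorem mem_cutSet {k m : ℤ} : m ∈ cutSet σ z k ↔ m + k ∈ Set.range (cut σ z) := by
  simp [cutSet, eq_sub_iff_add_eq, eq_comm]

theorem isGreatest_cutSet_inter_Iic {k : ℤ} (hk : 0 ≤ k) (hk' : k < (σ (z 0)).length) :
    IsGreatest (cutSet σ z k ∩ Set.Iic 0) (-k) := by
  refine ⟨⟨(mem_cutSet σ z).mpr ⟨0, by simp [cut_zero]⟩, by simpa using hk⟩, ?_⟩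
  rintro m ⟨hm, hm0⟩
  obtain ⟨ℓ, hℓ⟩ := (mem_cutSet σ z).mp hm
  have h1 : cut σ z 1 = (σ (z 0)).length := by simpa [cut_zero] using cut_succ σ z 0
  simp only [Set.mem_Iic] at hm0 ⊢
  rcases le_or_gt ℓ 0 with h | h
  · have := cut_monotone σ z h
    rw [cut_zero] at this
    omega
  · have := cut_monotone σ z (show (1 : ℤ) ≤ ℓ by omega)
    omega

end Cut

namespace IsSubstPt

variable {σ : A → List B} {z w : ℤ → A} {y y' : ℤ → B}

theorem apply_cut_add (hy : IsSubstPt σ z y) (ℓ : ℤ) {j : ℕ} (hj : j < (σ (z ℓ)).length) :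
    y (cut σ z ℓ + j) = (σ (z ℓ))[j] :=
  hy ℓ j hj

theorem comp_add (hy : IsSubstPt σ z y) (s : ℤ) :
    IsSubstPt σ (fun t => z (t + s)) fun p => y (p + cut σ z s) := by
  intro ℓ j hj
  simp only [cut_comp_add]
  rw [← hy (ℓ + s) j hj]
  congr 1
  ring

theorem eq_of_cut_eq (hinj : Function.Injective σ) (hy : IsSubstPt σ z y)
    (hy' : IsSubstPt σ w y) (hcut : cut σ z = cut σ w) : z = w := by
  funext ℓ
  have hlen : (σ (z ℓ)).length = (σ (w ℓ)).length := by
    have := cut_succ σ z ℓ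
    rw [hcut, cut_succ] at this
    omega
  refine hinj (List.ext_getElem hlen fun j hj hj' => ?_)
  rw [← hy.apply_cut_add ℓ hj, ← hy'.apply_cut_add ℓ hj', hcut]

end IsSubstPt

theorem exists_isSubstPt (σ : A → List B) (hσ : NonErasing σ) (z : ℤ → A) :
    ∃ y, IsSubstPt σ z y := by
  choose ℓ hℓ using exists_cut_le_lt σ z hσ
  -- the default letter is never read; it is there because `B` is not assumed inhabited
  refine ⟨fun p => (σ (z (ℓ p))).getD (p - cut σ z (ℓ p)).toNat ((σ (z 0)).head (hσ _)),
    fun i j hj => ?_⟩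
  have hi : ℓ (cut σ z i + j) = i := by
    have hlt := cut_strictMono σ z hσ
    obtain ⟨h₁, h₂⟩ := hℓ (cut σ z i + j)
    have := cut_succ σ z i
    have h₃ : ℓ (cut σ z i + j) < i + 1 := hlt.lt_iff_lt.mp (by omega)
    have h₄ : i < ℓ (cut σ z i + j) + 1 := hlt.lt_iff_lt.mp (by omega)
    omega
  simp [hi, List.getElem?_eq_getElem hj]

section Locality

variable (σ : A → List B) {z w : ℤ → A} {a b : ℤ} (hzw : ∀ ℓ ∈ Set.Ico a b, z ℓ = w ℓ)
include hzw

theorem cut_eq_add_of_eqOn {ℓ : ℤ} (hℓ : ℓ ∈ Set.Icc a b) :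
    cut σ w ℓ = cut σ z ℓ + (cut σ w a - cut σ z a) := by
  obtain ⟨ha, hb⟩ := hℓ
  induction ℓ, ha using Int.leInduction with
  | base => ring
  | succ n hn ih =>
    rw [cut_succ, cut_succ, hzw n ⟨hn, by omega⟩, ih (by omega)]
    ring

theorem add_mem_range_cut_of_eqOn (hσ : NonErasing σ) {p : ℤ}
    (hp : p ∈ Set.Icc (cut σ z a) (cut σ z b)) (hmem : p ∈ Set.range (cut σ z)) :
    p + (cut σ w a - cut σ z a) ∈ Set.range (cut σ w) := by
  obtain ⟨ℓ, rfl⟩ := hmem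
  have hmono := cut_strictMono σ z hσ
  exact ⟨ℓ, cut_eq_add_of_eqOn σ hzw ⟨hmono.le_iff_le.mp hp.1, hmono.le_iff_le.mp hp.2⟩⟩

theorem mem_range_cut_iff_of_eqOn (hσ : NonErasing σ) {p : ℤ}
    (hp : p ∈ Set.Icc (cut σ z a) (cut σ z b)) :
    p ∈ Set.range (cut σ z) ↔ p + (cut σ w a - cut σ z a) ∈ Set.range (cut σ w) := by
  refine ⟨add_mem_range_cut_of_eqOn σ hzw hσ hp, fun hmem => ?_⟩
  have hab : a ≤ b := (cut_strictMono σ z hσ).le_iff_le.mp (hp.1.trans hp.2)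
  have hb := cut_eq_add_of_eqOn σ hzw ⟨hab, le_rfl⟩
  have hp' : p + (cut σ w a - cut σ z a) ∈ Set.Icc (cut σ w a) (cut σ w b) :=
    ⟨by linarith [hp.1], by linarith [hp.2]⟩
  convert add_mem_range_cut_of_eqOn σ (fun ℓ hℓ => (hzw ℓ hℓ).symm) hσ hp' hmem using 1
  ring

theorem IsSubstPt.apply_eq_of_eqOn (hσ : NonErasing σ) {y y' : ℤ → B}
    (hy : IsSubstPt σ z y) (hy' : IsSubstPt σ w y') {p : ℤ}
    (hp : p ∈ Set.Ico (cut σ z a) (cut σ z b)) :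
    y p = y' (p + (cut σ w a - cut σ z a)) := by
  obtain ⟨ℓ, h₁, h₂⟩ := exists_cut_le_lt σ z hσ p
  have hmono := cut_strictMono σ z hσ
  have haℓ : a ≤ ℓ := Int.lt_add_one_iff.mp (hmono.lt_iff_lt.mp (hp.1.trans_lt h₂))
  have hℓb : ℓ < b := hmono.lt_iff_lt.mp (h₁.trans_lt hp.2)
  have hzℓ := hzw ℓ ⟨haℓ, hℓb⟩
  obtain ⟨j, rfl⟩ : ∃ j : ℕ, p = cut σ z ℓ + j := ⟨(p - cut σ z ℓ).toNat, by omega⟩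
  have hj : j < (σ (z ℓ)).length := by
    have := cut_succ σ z ℓ
    omega
  have hj' : j < (σ (w ℓ)).length := hzℓ ▸ hj
  have hshift : cut σ z ℓ + j + (cut σ w a - cut σ z a) = cut σ w ℓ + j := by
    rw [cut_eq_add_of_eqOn σ hzw ⟨haℓ, hℓb.le⟩]
    ring
  rw [hy.apply_cut_add ℓ hj, hshift, hy'.apply_cut_add ℓ hj']
  simp only [hzℓ]

end Locality

section OrbitClosure

variable [TopologicalSpace A] [DiscreteTopology A]

abbrev orbitClosure (x : ℤ → A) : Set (ℤ → A) :=
  closure {z : ℤ → A | ∃ n : ℤ, z = fun i => x (i + n)}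

theorem exists_eqOn_shift_of_mem_orbitClosure {x z : ℤ → A} (hz : z ∈ orbitClosure x)
    (a b : ℤ) : ∃ s, ∀ ℓ ∈ Set.Ico a b, z ℓ = x (ℓ + s) := by
  have hU : IsOpen ((Set.Ico a b).pi fun ℓ => {z ℓ}) :=
    isOpen_set_pi (Set.finite_Ico a b) fun _ _ => isOpen_discrete _
  obtain ⟨_, hw, s, rfl⟩ := mem_closure_iff.mp hz _ hU fun ℓ _ => rfl
  exact ⟨s, fun ℓ hℓ => (hw ℓ hℓ).symm⟩

variable (σ : A → List B) (hσ : NonErasing σ)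
include hσ

theorem IsSubstPt.exists_offset_of_mem_orbitClosure {x z : ℤ → A} {y₀ y : ℤ → B}
    (hx : IsSubstPt σ x y₀) (hz : z ∈ orbitClosure x) (hy : IsSubstPt σ z y) (P Q : ℤ) :
    ∃ d, ∀ p ∈ Set.Icc P Q,
      y p = y₀ (p + d) ∧ (p ∈ Set.range (cut σ z) ↔ p + d ∈ Set.range (cut σ x)) := by
  obtain ⟨a, ha⟩ := exists_cut_le σ z hσ P
  obtain ⟨b, hb⟩ := exists_lt_cut σ z hσ Q
  obtain ⟨s, hs⟩ := exists_eqOn_shift_of_mem_orbitClosure hz a b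
  refine ⟨cut σ (fun t => x (t + s)) a - cut σ z a + cut σ x s, fun p hp => ⟨?_, ?_⟩⟩
  · rw [IsSubstPt.apply_eq_of_eqOn σ hs hσ hy (hx.comp_add s)
      ⟨by linarith [hp.1], by linarith [hp.2]⟩]
    congr 1
    ring
  · rw [mem_range_cut_iff_of_eqOn σ hs hσ ⟨by linarith [hp.1], by linarith [hp.2]⟩,
      mem_range_cut_comp_add, add_assoc]

theorem cutSet_subset_of_mosseRec {x z₁ z₂ : ℤ → A} (hmosse : MosseRec σ x)
    (hz₁ : z₁ ∈ orbitClosure x) (hz₂ : z₂ ∈ orbitClosure x) {y : ℤ → B} {k₁ k₂ : ℤ}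
    (h₁ : IsRep σ y k₁ z₁) (h₂ : IsRep σ y k₂ z₂) : cutSet σ z₁ k₁ ⊆ cutSet σ z₂ k₂ := by
  obtain ⟨R, hR⟩ := hmosse
  obtain ⟨y₀, hy₀⟩ := exists_isSubstPt σ hσ x
  intro m hm
  rw [mem_cutSet] at hm ⊢
  obtain ⟨d₁, hd₁⟩ := hy₀.exists_offset_of_mem_orbitClosure σ hσ hz₁ h₁ (m + k₁ - R) (m + k₁ + R)
  obtain ⟨d₂, hd₂⟩ := hy₀.exists_offset_of_mem_orbitClosure σ hσ hz₂ h₂ (m + k₂ - R) (m + k₂ + R)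
  -- both windows of `σ(x)` read the word of `y` of radius `R` around `m`
  have hwindow : factor y₀ (m + k₁ + d₁ - R) (2 * R) = factor y₀ (m + k₂ + d₂ - R) (2 * R) := by
    refine factor_congr fun j hj => ?_
    have e₁ := (hd₁ (m + k₁ - R + j) ⟨by omega, by omega⟩).1
    have e₂ := (hd₂ (m + k₂ - R + j) ⟨by omega, by omega⟩).1
    rw [show m + k₁ + d₁ - R + j = m + k₁ - R + j + d₁ by ring,
      show m + k₂ + d₂ - R + j = m + k₂ - R + j + d₂ by ring, ← e₁, ← e₂]
    congr 1
    ring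
  have hcut₁ : m + k₁ + d₁ ∈ cutSet σ x 0 := by
    simpa [mem_cutSet] using (hd₁ (m + k₁) ⟨by omega, by omega⟩).2.mp hm
  have hcut₂ := hR y₀ hy₀ _ hcut₁ _ hwindow
  exact (hd₂ (m + k₂) ⟨by omega, by omega⟩).2.mpr (by simpa [mem_cutSet] using hcut₂)

end OrbitClosure

end Recog

open Recog in
theorem stmt6_general {A B : Type*}
    [TopologicalSpace A] [DiscreteTopology A]
    (σ : A → List B) (hσ : NonErasing σ) (x : ℤ → A)
    (X : Set (ℤ → A)) (hX : X = closure {z : ℤ → A | ∃ n : ℤ, z = fun i => x (i + n)})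
    (hinj : ∀ a b : A, σ a = σ b → a = b)
    (hmosse : MosseRec σ x) :
    RecIn σ X := by
  subst hX
  rintro y k₁ k₂ z₁ z₂ hz₁ hz₂ ⟨h₁, hk₁, hk₁'⟩ ⟨h₂, hk₂, hk₂'⟩
  have hcut : cutSet σ z₁ k₁ = cutSet σ z₂ k₂ :=
    (cutSet_subset_of_mosseRec σ hσ hmosse hz₁ hz₂ h₁ h₂).antisymm
      (cutSet_subset_of_mosseRec σ hσ hmosse hz₂ hz₁ h₂ h₁)
  obtain rfl : k₁ = k₂ := neg_injective <| (isGreatest_cutSet_inter_Iic σ z₁ hk₁ hk₁').unique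
    (hcut ▸ isGreatest_cutSet_inter_Iic σ z₂ hk₂ hk₂')
  have hrange : Set.range (cut σ z₁) = Set.range (cut σ z₂) :=
    Set.ext fun m => by simpa [mem_cutSet] using Set.ext_iff.mp hcut (m - k₁)
  refine ⟨rfl, IsSubstPt.eq_of_cut_eq hinj h₁ h₂ ?_⟩
  exact eq_of_strictMono_of_range_eq (cut_strictMono σ z₁ hσ) (cut_strictMono σ z₂ hσ) hrange
    (by rw [cut_zero, cut_zero])

open Recog in
/-- If the orbit closure `X` of `x` is minimal, `σ` is injective on letters,
and `σ` is recognizable in the sense of Mossé for `x`, then `σ` is recognizable in `X`. -/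
theorem stmt6 {A B : Type*} [Fintype A] [Fintype B]
    [TopologicalSpace A] [DiscreteTopology A]
    (σ : A → List B) (hσ : NonErasing σ) (x : ℤ → A)
    (X : Set (ℤ → A)) (hX : X = closure {z : ℤ → A | ∃ n : ℤ, z = fun i => x (i + n)})
    (hmin : ∀ Y : Set (ℤ → A), Y ⊆ X → IsClosed Y → ShiftInvariant Y → Y = ∅ ∨ Y = X)
    (hinj : ∀ a b : A, σ a = σ b → a = b)
    (hmosse : MosseRec σ x) :
    RecIn σ X :=
  stmt6_general σ hσ x X hX hinj hmosse
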